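/- arXiv:1202.6662 — 2 statements merged into one kernel-verified Lean document; each statement's English description precedes it below -/
import Mathlib

section
/- Let W• be a birational graded linear series on ℂⁿ with every W_k finite dimensional over ℂ, and let m̄ ∈ (ℝ_{>0})^r. Then j(W_{kl};m̄) ≥ l·j(W_k;m̄) for all positive integers k and l. -/
open scoped BigOperators Pointwise

noncomputable section

/-- The Laurent polynomial ring `R = ℂ[x₁^{±1},…,x_n^{±1}]`, as the monoid algebra of `ℤⁿ`. -/
abbrev Laurent (n : ℕ) := AddMonoidAlgebra ℂ (Fin n → ℤ)

namespace OkSesh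

variable {n : ℕ}

instance (n : ℕ) : IsDomain (Laurent n) := NoZeroDivisors.to_isDomain _

/-- The monomial `x^u` for `u ∈ ℤⁿ`. -/
def mono (u : Fin n → ℤ) : Laurent n := AddMonoidAlgebra.single u 1

/-- casting ℤⁿ into ℝⁿ -/
def castR (u : Fin n → ℤ) : Fin n → ℝ := fun i => (u i : ℝ)

/-- casting ℕⁿ into ℝⁿ -/
def castN (u : Fin n → ℕ) : Fin n → ℝ := fun i => (u i : ℝ)

/-- The character of the torus `(ℂ*)ⁿ` at a point `p`, as a monoid hom into `ℂˣ`. -/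
def torusCharU (p : Fin n → ℂˣ) : Multiplicative (Fin n → ℤ) →* ℂˣ where
  toFun u := ∏ i, (p i) ^ (Multiplicative.toAdd u i)
  map_one' := by simp
  map_mul' u v := by
    simp only [toAdd_mul, Pi.add_apply, zpow_add, Finset.prod_mul_distrib]

/-- Evaluation of Laurent polynomials at a point `p ∈ (ℂ*)ⁿ`. -/
def evalAt (p : Fin n → ℂˣ) : Laurent n →ₐ[ℂ] ℂ :=
  AddMonoidAlgebra.lift ℂ ℂ (Fin n → ℤ) ((Units.coeHom ℂ).comp (torusCharU p))

/-- The ideal `𝔪_p^{m+1}`, interpreted as the unit ideal when `m ≤ -1`. -/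
def jetIdeal (p : Fin n → ℂˣ) (m : ℤ) : Ideal (Laurent n) :=
  (RingHom.ker (evalAt p : Laurent n →+* ℂ)) ^ (m + 1).toNat

/-- `W` separates `m̄`-jets at the points `p i`. -/
def SeparatesJetsAt {ι : Type} (W : Submodule ℂ (Laurent n)) (m : ι → ℤ)
    (p : ι → Fin n → ℂˣ) : Prop :=
  Function.Surjective fun (w : W) (i : ι) =>
    Ideal.Quotient.mk (jetIdeal (p i) (m i)) (w : Laurent n)

/-- `W` generically separates `m̄`-jets: there is a nonempty Zariski open subset of
`((ℂ*)ⁿ)^r` (given by the nonvanishing of a polynomial `F` in the coordinates of the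
points) on whose tuples of pairwise distinct points `W` separates `m̄`-jets. -/
def GenSepJets {ι : Type} [Fintype ι] (W : Submodule ℂ (Laurent n)) (m : ι → ℤ) : Prop :=
  ∃ F : MvPolynomial (ι × Fin n) ℂ,
    (∃ p : ι → Fin n → ℂˣ, MvPolynomial.eval (fun q => (p q.1 q.2 : ℂ)) F ≠ 0) ∧
    ∀ p : ι → Fin n → ℂˣ, Function.Injective p →
      MvPolynomial.eval (fun q => (p q.1 q.2 : ℂ)) F ≠ 0 → SeparatesJetsAt W m p

/-- `j(W; m̄) = sup { t ∈ ℝ | W generically separates ⌈t·m̄⌉-jets }`, as an extended real. -/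
def jSep {ι : Type} [Fintype ι] (W : Submodule ℂ (Laurent n)) (m : ι → ℝ) : EReal :=
  sSup ((fun t : ℝ => (t : EReal)) '' {t : ℝ | GenSepJets W fun i => ⌈t * m i⌉})

/-- The Seshadri constant `ε(W•; m̄) = sup_{k>0} j(W_k; m̄)/k` of a graded linear series. -/
def seshadri {ι : Type} [Fintype ι] (W : ℕ → Submodule ℂ (Laurent n)) (m : ι → ℝ) : EReal :=
  ⨆ k : {k : ℕ // 0 < k}, jSep (W (k : ℕ)) m * ((((k : ℕ) : ℝ))⁻¹ : EReal)

/-- `V_S`, the span of the monomials `x^u` with `u ∈ S ∩ ℤⁿ`. -/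
def VS (S : Set (Fin n → ℝ)) : Submodule ℂ (Laurent n) :=
  Submodule.span ℂ {f | ∃ u : Fin n → ℤ, castR u ∈ S ∧ f = mono u}

/-- `s̃(S; m̄) = j(V_S; m̄)`. -/
def sTilde {ι : Type} [Fintype ι] (S : Set (Fin n → ℝ)) (m : ι → ℝ) : EReal :=
  jSep (VS S) m

/-- The dilation `kΔ`. -/
def dilate (k : ℕ) (Δ : Set (Fin n → ℝ)) : Set (Fin n → ℝ) := (fun v => (k : ℝ) • v) '' Δ

open scoped Classical in
/-- `s(Δ; m̄) = sup_{k>0} s̃(kΔ; m̄)/k` if `dim Δ = n`, and `0` otherwise. -/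
def sConv {ι : Type} [Fintype ι] (Δ : Set (Fin n → ℝ)) (m : ι → ℝ) : EReal :=
  if affineSpan ℝ Δ = ⊤ then
    ⨆ k : {k : ℕ // 0 < k}, sTilde (dilate (k : ℕ) Δ) m * ((((k : ℕ) : ℝ))⁻¹ : EReal)
  else 0

/-- The nonnegative orthant in `ℝⁿ`; `V` of it is the polynomial subring `ℂ[x₁,…,x_n] ⊆ R`. -/
def nonnegOrthant (n : ℕ) : Set (Fin n → ℝ) := {v | ∀ i, 0 ≤ v i}

/-- A graded linear series on `ℂⁿ`: a sequence of subspaces `W_k ⊆ ℂ[x₁,…,x_n] ⊆ R` with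
`W₀ = ℂ` and `W_k · W_l ⊆ W_{k+l}`. -/
structure GLS (n : ℕ) where
  W : ℕ → Submodule ℂ (Laurent n)
  poly : ∀ k, W k ≤ VS (nonnegOrthant n)
  zero_eq : W 0 = Submodule.span ℂ {(1 : Laurent n)}
  mul_mem : ∀ k l : ℕ, ∀ f ∈ W k, ∀ g ∈ W l, f * g ∈ W (k + l)

/-- The subfield of `ℂ(x₁,…,x_n)` generated over `ℂ` by the ratios `f/g`, `f, g ∈ W`. -/
def ratioField (Wk : Submodule ℂ (Laurent n)) : Subfield (FractionRing (Laurent n)) :=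
  Subfield.closure
    ({q | ∃ c : ℂ, q = algebraMap (Laurent n) (FractionRing (Laurent n)) (algebraMap ℂ (Laurent n) c)} ∪
     {q | ∃ f ∈ Wk, ∃ g ∈ Wk, g ≠ 0 ∧
        q = algebraMap (Laurent n) (FractionRing (Laurent n)) f /
            algebraMap (Laurent n) (FractionRing (Laurent n)) g})

/-- A graded linear series is birational if for all large `k` the ratios of elements of `W_k`
generate the whole function field over `ℂ`. -/
def IsBirational (G : GLS n) : Prop :=
  ∃ N : ℕ, ∀ k ≥ N, ratioField (G.W k) = ⊤

/-- A monomial order on `ℕⁿ`: a (strict) total order compatible with addition such that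
`0` is the smallest element. -/
structure MonOrder (n : ℕ) where
  gt : (Fin n → ℕ) → (Fin n → ℕ) → Prop
  trans : ∀ {u v w}, gt u v → gt v w → gt u w
  asymm : ∀ {u v}, gt u v → ¬ gt v u
  total : ∀ u v, u = v ∨ gt u v ∨ gt v u
  pos : ∀ u : Fin n → ℕ, u ≠ 0 → gt u 0
  add_right : ∀ u v w, gt v u → gt (w + v) (w + u)

open scoped Classical in
/-- `ν(f)`: the `>`-least exponent appearing in the polynomial `f` (junk value `0` if there
is no such exponent). -/
def nu (t : MonOrder n) (f : Laurent n) : Fin n → ℕ :=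
  if h : ∃ u : Fin n → ℕ, (f.coeff : (Fin n → ℤ) →₀ ℂ) (fun i => (u i : ℤ)) ≠ 0 ∧
      ∀ v : Fin n → ℕ, (f.coeff : (Fin n → ℤ) →₀ ℂ) (fun i => (v i : ℤ)) ≠ 0 → v ≠ u → t.gt v u
  then h.choose else 0

/-- The semigroup `Γ_{W•} = ∪_k {k} × ν(W_k \ {0}) ⊆ ℕ × ℕⁿ`. -/
def gamma (t : MonOrder n) (G : GLS n) : Set (ℕ × (Fin n → ℕ)) :=
  {p | ∃ f ∈ G.W p.1, f ≠ 0 ∧ p.2 = nu t f}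

/-- The closed convex cone spanned by a set. -/
def coneSpan {E : Type*} [AddCommMonoid E] [Module ℝ E] [TopologicalSpace E] (S : Set E) :
    Set E :=
  closure {x | ∃ c : ℝ, 0 ≤ c ∧ ∃ y ∈ convexHull ℝ S, x = c • y}

/-- A subset of `ℕ × ℕⁿ` regarded inside `ℝ × ℝⁿ`. -/
def gammaR (Γ : Set (ℕ × (Fin n → ℕ))) : Set (ℝ × (Fin n → ℝ)) :=
  (fun p => ((p.1 : ℝ), castN p.2)) '' Γ

/-- `Δ(Γ) = Σ(Γ) ∩ ({1} × ℝⁿ)`, viewed in `ℝⁿ`. -/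
def okBody (Γ : Set (ℕ × (Fin n → ℕ))) : Set (Fin n → ℝ) :=
  {v | ((1 : ℝ), v) ∈ coneSpan (gammaR Γ)}

/-- The Okounkov body `Δ_>(W•)` of a graded linear series with respect to a monomial order. -/
def okounkov (t : MonOrder n) (G : GLS n) : Set (Fin n → ℝ) := okBody (gamma t G)

end OkSesh

namespace OkSesh

variable {n : ℕ}

/-- The `l`-th Veronese `W•^{(l)}`, given by `W_k^{(l)} = W_{kl}`. -/
def GLS.shift (G : GLS n) (l : ℕ) : GLS n where
  W k := G.W (k * l)
  poly k := G.poly (k * l)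
  zero_eq := by
    show G.W (0 * l) = _
    rw [Nat.zero_mul]; exact G.zero_eq
  mul_mem k k' f hf g hg := by
    have h := G.mul_mem (k * l) (k' * l) f hf g hg
    rwa [← add_mul] at h

/-- The Laurent polynomial `(x - 1_n)^λ = ∏ (x_i - 1)^{λ_i}`. -/
def xSubOnePow (l : Fin n → ℕ) : Laurent n :=
  ∏ i, (mono (Pi.single i 1) - 1) ^ (l i)

/-- The monomial ideal `𝔫` (in `x - 1_n`) attached to the complement of `Φ`. -/
def idealN (Φ : Finset (Fin n → ℕ)) : Ideal (Laurent n) :=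
  Ideal.span {g | ∃ l : Fin n → ℕ, l ∉ Φ ∧ g = xSubOnePow l}

/-- The rank of a (possibly infinite) matrix: the dimension of its column space. -/
def colRank {ι κ : Type*} (A : ι → κ → ℂ) : ℕ :=
  Module.finrank ℂ (Submodule.span ℂ (Set.range fun c : κ => fun i : ι => A i c))

/-- The matrix `A_{S,𝔫} = ([u;λ])` with rows indexed by `Φ` and columns by `S ∩ ℕⁿ`. -/
def binomMat (Φ : Finset (Fin n → ℕ)) (S : Set (Fin n → ℝ)) :
    {l // l ∈ Φ} → {u : Fin n → ℕ // castN u ∈ S} → ℂ :=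
  fun l u => ((∏ k, (u.1 k).choose (l.1 k) : ℕ) : ℂ)

/-- The matrix `A_{S,m}` with rows indexed by `{λ : |λ| ≤ m}` and columns by `S ∩ ℕⁿ`. -/
def degMat (S : Set (Fin n → ℝ)) (m : ℕ) :
    {l : Fin n → ℕ // ∑ i, l i ≤ m} → {u : Fin n → ℕ // castN u ∈ S} → ℂ :=
  fun l u => ((∏ k, (u.1 k).choose (l.1 k) : ℕ) : ℂ)

/-- `max { m ∈ ℕ | rank A_{S,m} = C(m+n,n) }`. -/
def maxJet (S : Set (Fin n → ℝ)) : ℕ :=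
  sSup {m : ℕ | colRank (degMat S m) = (m + n).choose n}

/-- The real extension `ι_ℝ : ℝⁿ → ℝⁿ` of a group homomorphism `ι : ℤⁿ → ℤⁿ`. -/
def realify (f : (Fin n → ℤ) →+ (Fin n → ℤ)) (v : Fin n → ℝ) : Fin n → ℝ :=
  fun j => ∑ i, v i * ((f (Pi.single i 1)) j : ℝ)

/-- An integral polytope: the convex hull of a finite set of lattice points. -/
def IsIntegralPolytope (P : Set (Fin n → ℝ)) : Prop :=
  ∃ V : Finset (Fin n → ℤ), P = convexHull ℝ (castR '' (V : Set (Fin n → ℤ)))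

/-- `τ` is a face of `σ`: it is cut out on `σ` by a linear functional maximized on `σ`. -/
def IsFaceOf (τ σ : Set (Fin n → ℝ)) : Prop :=
  ∃ (g : (Fin n → ℝ) →ₗ[ℝ] ℝ) (c : ℝ), (∀ x ∈ σ, g x ≤ c) ∧ τ = {x ∈ σ | g x = c}

/-- An integral polytope decomposition of `P`. -/
structure IsIntDecomp (P : Set (Fin n → ℝ)) (Pc : Finset (Set (Fin n → ℝ))) : Prop where
  integral : ∀ σ ∈ Pc, IsIntegralPolytope σ
  cover : P = ⋃ σ ∈ Pc, σ
  faces : ∀ σ ∈ Pc, ∀ τ, IsFaceOf τ σ → τ.Nonempty → τ ∈ Pc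
  inter : ∀ σ ∈ Pc, ∀ σ' ∈ Pc, (σ ∩ σ').Nonempty →
    IsFaceOf (σ ∩ σ') σ ∧ IsFaceOf (σ ∩ σ') σ'

/-- A lifting function of an integral polytope decomposition `Pc` of `P`: piecewise affine and
strictly convex with respect to `Pc`, taking integral values on lattice points of `P`. -/
def IsLifting (P : Set (Fin n → ℝ)) (Pc : Finset (Set (Fin n → ℝ)))
    (φ : (Fin n → ℝ) → ℝ) : Prop :=
  ConvexOn ℝ P φ ∧
  (∀ σ ∈ Pc, ∃ a : (Fin n → ℝ) →ᵃ[ℝ] ℝ, ∀ x ∈ σ, φ x = a x) ∧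
  (∀ σ ∈ Pc, ∀ σ' ∈ Pc, affineSpan ℝ σ = ⊤ → affineSpan ℝ σ' = ⊤ → σ ≠ σ' →
    ¬ ∃ a : (Fin n → ℝ) →ᵃ[ℝ] ℝ, (∀ x ∈ σ, φ x = a x) ∧ (∀ x ∈ σ', φ x = a x)) ∧
  (∀ u : Fin n → ℤ, castR u ∈ P → ∃ z : ℤ, φ (castR u) = (z : ℝ))

end OkSesh

namespace OkSesh


variable {n : ℕ}

private lemma corePLemma {ι : Type} [DecidableEq ι] (W : Submodule ℂ (Laurent n)) (J : ι → Ideal (Laurent n))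
    (c : ι → ℕ)
    (H : ∀ f : ι → Laurent n, ∃ w ∈ W, ∀ i, w - f i ∈ (J i) ^ (c i))
    (i : ι) (a : ℕ) (hci : c i = a + 1) :
    ∀ l : ℕ, 1 ≤ l → ∀ d : ℕ, d ≤ l * a → ∀ f ∈ (J i) ^ d,
      ∃ s ∈ W ^ l, s - f ∈ (J i) ^ (d + 1) ∧ ∀ j, j ≠ i → s ∈ (J j) ^ (l * c j) := by
  intro l hl
  induction l, hl using Nat.le_induction with
  | base =>
    intro d hd f hf
    obtain ⟨w, hwW, hw⟩ := H (fun j => if j = i then f else 0)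
    refine ⟨w, by simpa [pow_one] using hwW, ?_, ?_⟩
    · have h1 := hw i
      simp only [if_pos rfl] at h1
      rw [hci] at h1
      exact Ideal.pow_le_pow_right (by omega) h1
    · intro j hj
      have h2 := hw j
      simp only [if_neg hj, sub_zero] at h2
      simpa [one_mul] using h2
  | succ l hl IH =>
    intro d hd f hf
    obtain ⟨L, hL⟩ : ∃ L : ℕ, L = l * a := ⟨_, rfl⟩
    have hsum : (l + 1) * a = L + a := by rw [hL]; ring
    rw [hsum] at hd
    obtain ⟨d1, d2, hdd, hd1, hd2⟩ : ∃ d1 d2, d = d1 + d2 ∧ d1 ≤ L ∧ d2 ≤ a := by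
      rcases le_or_gt d L with h | h
      · exact ⟨d, 0, by omega, by omega, by omega⟩
      · exact ⟨L, d - L, by omega, le_refl _, by omega⟩
    rw [hdd, pow_add] at hf
    have hd1' : d1 ≤ l * a := by omega
    refine Submodule.mul_induction_on hf ?_ ?_
    · intro g hg h hh
      obtain ⟨s0, hs0W, hs0d, hs0side⟩ := IH d1 hd1' g hg
      obtain ⟨w, hwW, hw⟩ := H (fun j => if j = i then h else 0)
      have hwi : w - h ∈ (J i) ^ (a + 1) := by
        have h3 := hw i; simp only [if_pos rfl] at h3; rwa [hci] at h3
      have hs0mem : s0 ∈ (J i) ^ d1 := by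
        have h4 : s0 = (s0 - g) + g := by ring
        rw [h4]
        exact add_mem (Ideal.pow_le_pow_right (Nat.le_succ _) hs0d) hg
      refine ⟨s0 * w, ?_, ?_, ?_⟩
      · rw [pow_succ]; exact Submodule.mul_mem_mul hs0W hwW
      · have key : s0 * w - g * h = s0 * (w - h) + (s0 - g) * h := by ring
        rw [key]
        refine add_mem ?_ ?_
        · have h5 : s0 * (w - h) ∈ (J i) ^ (d1 + (a + 1)) := by
            rw [pow_add]; exact Submodule.mul_mem_mul hs0mem hwi
          exact Ideal.pow_le_pow_right (by omega) h5
        · have h6 : (s0 - g) * h ∈ (J i) ^ ((d1 + 1) + d2) := by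
            rw [pow_add]; exact Submodule.mul_mem_mul hs0d hh
          exact Ideal.pow_le_pow_right (by omega) h6
      · intro j hj
        have hwj : w ∈ (J j) ^ (c j) := by
          have h7 := hw j; simpa only [if_neg hj, sub_zero] using h7
        have h8 : s0 * w ∈ (J j) ^ (l * c j + c j) := by
          rw [pow_add]; exact Submodule.mul_mem_mul (hs0side j hj) hwj
        have he : (l + 1) * c j = l * c j + c j := by ring
        rwa [he]
    · rintro x y ⟨s1, h1W, h1d, h1s⟩ ⟨s2, h2W, h2d, h2s⟩
      refine ⟨s1 + s2, add_mem h1W h2W, ?_, fun j hj => add_mem (h1s j hj) (h2s j hj)⟩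
      have h9 : s1 + s2 - (x + y) = (s1 - x) + (s2 - y) := by ring
      rw [h9]; exact add_mem h1d h2d

private lemma coreTLemma {ι : Type} [DecidableEq ι] (W : Submodule ℂ (Laurent n)) (J : ι → Ideal (Laurent n))
    (c : ι → ℕ)
    (H : ∀ f : ι → Laurent n, ∃ w ∈ W, ∀ i, w - f i ∈ (J i) ^ (c i))
    (i : ι) (a : ℕ) (hci : c i = a + 1) (l : ℕ) (hl : 1 ≤ l) :
    ∀ e : ℕ, ∀ f ∈ (J i) ^ (l * a + 1 - e), ∃ s ∈ W ^ l,
      s - f ∈ (J i) ^ (l * a + 1) ∧ ∀ j, j ≠ i → s ∈ (J j) ^ (l * c j) := by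
  obtain ⟨L, hL⟩ : ∃ L : ℕ, L = l * a := ⟨_, rfl⟩
  rw [← hL]
  intro e
  induction e with
  | zero =>
    intro f hf
    exact ⟨0, zero_mem _, by simpa using neg_mem hf, fun j hj => zero_mem _⟩
  | succ e IH =>
    intro f hf
    have hdle : L + 1 - (e + 1) ≤ l * a := by omega
    obtain ⟨s0, hs0W, hs0d, hs0s⟩ :=
      corePLemma W J c H i a hci l hl (L + 1 - (e + 1)) hdle f hf
    have h1 : s0 - f ∈ (J i) ^ (L + 1 - e) :=
      Ideal.pow_le_pow_right (by omega) hs0d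
    obtain ⟨s1, hs1W, hs1d, hs1s⟩ := IH (s0 - f) h1
    refine ⟨s0 - s1, sub_mem hs0W hs1W, ?_, fun j hj => sub_mem (hs0s j hj) (hs1s j hj)⟩
    have h2 : s0 - s1 - f = -(s1 - (s0 - f)) := by ring
    rw [h2]; exact neg_mem hs1d

private lemma corePoint {ι : Type} [DecidableEq ι] (W : Submodule ℂ (Laurent n)) (J : ι → Ideal (Laurent n))
    (c : ι → ℕ)
    (H : ∀ f : ι → Laurent n, ∃ w ∈ W, ∀ i, w - f i ∈ (J i) ^ (c i))
    (l : ℕ) (hl : 1 ≤ l) (i : ι) (f : Laurent n) :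
    ∃ s ∈ W ^ l, s - f ∈ (J i) ^ (l * c i - (l - 1)) ∧ ∀ j, j ≠ i → s ∈ (J j) ^ (l * c j) := by
  rcases Nat.eq_zero_or_pos (c i) with h0 | hpos
  · obtain ⟨w, hwW, hw⟩ := H (fun _ => 0)
    refine ⟨w ^ l, Submodule.pow_mem_pow W hwW l, ?_, ?_⟩
    · rw [h0]
      simp [Ideal.one_eq_top]
    · intro j hj
      have hwj : w ∈ (J j) ^ (c j) := by simpa using hw j
      have h1 : w ^ l ∈ ((J j) ^ (c j)) ^ l := Ideal.pow_mem_pow hwj l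
      rwa [← pow_mul, mul_comm] at h1
  · obtain ⟨a, ha⟩ : ∃ a, c i = a + 1 := ⟨c i - 1, by omega⟩
    have hf0 : f ∈ (J i) ^ (l * a + 1 - (l * a + 1)) := by
      rw [Nat.sub_self, pow_zero, Ideal.one_eq_top]
      exact Submodule.mem_top
    obtain ⟨s, hsW, hsd, hss⟩ := coreTLemma W J c H i a ha l hl (l * a + 1) f hf0
    refine ⟨s, hsW, ?_, hss⟩
    have he : l * c i - (l - 1) = l * a + 1 := by
      rw [ha, Nat.mul_succ]
      generalize l * a = P
      omega
    rwa [he]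

private lemma sepJets_mono_W {ι : Type} {W W' : Submodule ℂ (Laurent n)} (h : W ≤ W')
    {m : ι → ℤ} {p : ι → Fin n → ℂˣ} (hs : SeparatesJetsAt W m p) :
    SeparatesJetsAt W' m p := by
  intro y
  obtain ⟨w, hw⟩ := hs y
  exact ⟨⟨w.1, h w.2⟩, hw⟩

private lemma sepJets_pow {ι : Type} [DecidableEq ι] [Fintype ι]
    (W : Submodule ℂ (Laurent n)) (a b : ι → ℤ) (p : ι → Fin n → ℂˣ)
    (l : ℕ) (hl : 1 ≤ l)
    (hb : ∀ i, (b i + 1).toNat ≤ l * (a i + 1).toNat - (l - 1))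
    (hsep : SeparatesJetsAt W a p) :
    SeparatesJetsAt (W ^ l) b p := by
  have hJId : ∀ (i : ι) (m : ℤ), jetIdeal (p i) m =
      (RingHom.ker (evalAt (p i) : Laurent n →+* ℂ)) ^ (m + 1).toNat := fun _ _ => rfl
  have H : ∀ f : ι → Laurent n, ∃ w ∈ W, ∀ i,
      w - f i ∈ (RingHom.ker (evalAt (p i) : Laurent n →+* ℂ)) ^ ((a i + 1).toNat) := by
    intro f
    obtain ⟨w, hw⟩ := hsep (fun i => Ideal.Quotient.mk _ (f i))
    refine ⟨w.1, w.2, fun i => ?_⟩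
    have h1 : Ideal.Quotient.mk (jetIdeal (p i) (a i)) (w : Laurent n) =
        Ideal.Quotient.mk (jetIdeal (p i) (a i)) (f i) := congrFun hw i
    exact Ideal.Quotient.eq.mp h1
  intro y
  choose f hf using fun i => Ideal.Quotient.mk_surjective (y i)
  choose s hsW hsd hss using fun i =>
    corePoint W (fun i => RingHom.ker (evalAt (p i) : Laurent n →+* ℂ))
      (fun i => (a i + 1).toNat) H l hl i (f i)
  refine ⟨⟨∑ i, s i, sum_mem fun i _ => hsW i⟩, ?_⟩
  funext j
  show Ideal.Quotient.mk (jetIdeal (p j) (b j)) (∑ i, s i) = y j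
  have hzero : ∀ i ∈ Finset.univ, i ≠ j →
      Ideal.Quotient.mk (jetIdeal (p j) (b j)) (s i) = 0 := by
    intro i _ hij
    rw [Ideal.Quotient.eq_zero_iff_mem, hJId j (b j)]
    have hle : (b j + 1).toNat ≤ l * (a j + 1).toNat := le_trans (hb j) (Nat.sub_le _ _)
    exact Ideal.pow_le_pow_right hle (hss i j hij.symm)
  rw [map_sum, Finset.sum_eq_single_of_mem j (Finset.mem_univ j) hzero]
  have h1 : s j - f j ∈ jetIdeal (p j) (b j) := by
    rw [hJId j (b j)]
    exact Ideal.pow_le_pow_right (hb j) (hsd j)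
  rw [Ideal.Quotient.eq.mpr h1]
  exact hf j

private lemma GLSpow_le (G : GLS n) (k : ℕ) (l : ℕ) (hl : 1 ≤ l) :
    (G.W k) ^ l ≤ G.W (k * l) := by
  induction l, hl using Nat.le_induction with
  | base => rw [pow_one, mul_one]
  | succ l hl IH =>
    rw [pow_succ]
    refine Submodule.mul_le.mpr fun x hx y hy => ?_
    have h1 := G.mul_mem (k * l) k x (IH hx) y hy
    rwa [← Nat.mul_succ] at h1

private lemma toNat_jet_bound (l : ℕ) (hl : 1 ≤ l) (a b : ℤ) (h : b ≤ (l : ℤ) * a) :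
    (b + 1).toNat ≤ l * (a + 1).toNat - (l - 1) := by
  rcases le_or_gt 0 a with ha | ha
  · obtain ⟨A, hA⟩ : ∃ A : ℕ, (A : ℤ) = a := ⟨a.toNat, Int.toNat_of_nonneg ha⟩
    obtain ⟨P, hP⟩ : ∃ P : ℕ, P = l * A := ⟨_, rfl⟩
    have h1 : (a + 1).toNat = A + 1 := by omega
    have h2 : l * (A + 1) = P + l := by rw [hP]; ring
    have hPa : (P : ℤ) = (l : ℤ) * a := by rw [hP]; push_cast [hA]; ring
    have hb' : b ≤ (P : ℤ) := by rw [hPa]; exact h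
    rw [h1, h2]
    omega
  · have h4 : (l : ℤ) * a ≤ (l : ℤ) * (-1) :=
      mul_le_mul_of_nonneg_left (by omega) (by positivity)
    rw [mul_neg_one] at h4
    have h5 : b ≤ -(l : ℤ) := le_trans h h4
    have h6 : (b + 1).toNat = 0 := by omega
    rw [h6]
    exact Nat.zero_le _

private lemma ceil_nat_mul_le (l : ℕ) (y : ℝ) : ⌈(l : ℝ) * y⌉ ≤ (l : ℤ) * ⌈y⌉ := by
  rw [Int.ceil_le]
  push_cast
  exact mul_le_mul_of_nonneg_left (Int.le_ceil y) (by positivity)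

private lemma gensep_imp {r : ℕ} (G : GLS n) (k l : ℕ) (hl : 1 ≤ l)
    (m : Fin r → ℝ) (t : ℝ)
    (h : GenSepJets (G.W k) fun i => ⌈t * m i⌉) :
    GenSepJets (G.W (k * l)) fun i => ⌈(l : ℝ) * t * m i⌉ := by
  classical
  obtain ⟨F, hF1, hF2⟩ := h
  refine ⟨F, hF1, fun p hp hFp => ?_⟩
  have hsep := hF2 p hp hFp
  have hb : ∀ i, (⌈(l : ℝ) * t * m i⌉ + 1).toNat ≤ l * (⌈t * m i⌉ + 1).toNat - (l - 1) := by
    intro i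
    apply toNat_jet_bound l hl
    calc ⌈(l : ℝ) * t * m i⌉ = ⌈(l : ℝ) * (t * m i)⌉ := by rw [mul_assoc]
    _ ≤ (l : ℤ) * ⌈t * m i⌉ := ceil_nat_mul_le l (t * m i)
  exact sepJets_mono_W (GLSpow_le G k l hl)
    (sepJets_pow (G.W k) _ _ p l hl hb hsep)

/-- **Claim.** For a birational graded linear series of finite dimensional type,
`j(W_{kl};m̄) ≥ l · j(W_k;m̄)` for all positive integers `k, l`. -/
theorem jSep_mul_le {n r : ℕ} (G : GLS n) (hG : IsBirational G)
    (hfd : ∀ k, FiniteDimensional ℂ (G.W k))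
    (hr : 0 < r) (m : Fin r → ℝ) (hm : ∀ i, 0 < m i)
    (k l : ℕ) (hk : 0 < k) (hl : 0 < l) :
    (((l : ℝ)) : EReal) * jSep (G.W k) m ≤ jSep (G.W (k * l)) m := by
  classical
  have hl1 : 1 ≤ l := hl
  have hpos : (0 : EReal) < ((l : ℝ) : EReal) := by
    exact_mod_cast (by positivity : (0 : ℝ) < (l : ℝ))
  have htop : ((l : ℝ) : EReal) ≠ ⊤ := EReal.coe_ne_top _
  rw [mul_comm]
  unfold jSep
  rw [← EReal.le_div_iff_mul_le hpos htop]
  refine sSup_le ?_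
  rintro x ⟨t, ht, rfl⟩
  rw [EReal.le_div_iff_mul_le hpos htop]
  have h2 := gensep_imp G k l hl1 m t ht
  have hc : ((t : ℝ) : EReal) * ((l : ℝ) : EReal) = (((l : ℝ) * t : ℝ) : EReal) := by
    rw [← EReal.coe_mul, mul_comm]
  rw [hc]
  exact le_sSup ⟨(l : ℝ) * t, h2, rfl⟩


end OkSesh
end
end

section
/- Let Φ ⊆ ℕⁿ be a finite, downward closed set (λ ∈ Φ and λ' ≤ λ componentwise imply λ' ∈ Φ), let 1_n = (1,…,1) ∈ (ℂ*)ⁿ, and let 𝔫 ⊆ R = ℂ[x₁^{±1},…,x_n^{±1}] be the ideal generated by {(x−1_n)^λ : λ ∈ ℕⁿ\Φ}, where (x−1_n)^λ = ∏_{k=1}^n (x_k−1)^{λ_k}. Let S ⊆ ℝ_{≥0}ⁿ be bounded and let A_{S,𝔫} be the matrix ([u;λ])_{λ∈Φ, u∈S∩ℕⁿ}. Then the following are equivalent: (i) the natural map V_S → R/𝔫 is not surjective; (ii) rank A_{S,𝔫} < #Φ. Moreover, if #(S∩ℕⁿ) = #Φ, then (i) and (ii) are also equivalent to: (iii) there exists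 a nonzero polynomial f in the real span of the monomials {u^λ = u₁^{λ₁}⋯u_n^{λ_n} : λ ∈ Φ} in ℝ[u₁,…,u_n] such that every point of S∩ℕⁿ lies on the hypersurface {f = 0} in ℝⁿ. -/
open scoped BigOperators Pointwise

noncomputable section

namespace OkSesh

open Finset MvPolynomial

variable {n : ℕ}

/-- Pi function to Finsupp. -/
def fsupp (l : Fin n → ℕ) : Fin n →₀ ℕ := Finsupp.equivFunOnFinite.symm l

lemma fsupp_apply (l : Fin n → ℕ) (i : Fin n) : fsupp l i = l i := rfl

lemma fsupp_inj : Function.Injective (fsupp (n := n)) :=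
  Finsupp.equivFunOnFinite.symm.injective

/-- lattice monomial ideal in MvPolynomial -/
def nmon (Φ : Finset (Fin n → ℕ)) : Ideal (MvPolynomial (Fin n) ℂ) :=
  Ideal.span {p | ∃ μ : Fin n → ℕ, μ ∉ Φ ∧ p = monomial (fsupp μ) (1:ℂ)}

lemma coeff_zero_of_mem_nmon {Φ : Finset (Fin n → ℕ)}
    (hdc : ∀ l ∈ Φ, ∀ l' : Fin n → ℕ, (∀ i, l' i ≤ l i) → l' ∈ Φ)
    {q : MvPolynomial (Fin n) ℂ} (hq : q ∈ nmon Φ) {lam : Fin n → ℕ} (hlam : lam ∈ Φ) :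
    coeff (fsupp lam) q = 0 := by
  have H : ∀ r : MvPolynomial (Fin n) ℂ, coeff (fsupp lam) (r * q) = 0 := by
    refine Submodule.span_induction ?_ ?_ ?_ ?_ hq
    · rintro p ⟨μ, hμ, rfl⟩ r
      rw [coeff_mul_monomial']
      rw [if_neg]
      intro hle
      exact hμ (hdc lam hlam μ (fun i => by simpa [fsupp_apply] using hle i))
    · intro r; rw [mul_zero, coeff_zero]
    · intro a b _ _ ha hb r
      rw [mul_add, coeff_add, ha, hb, add_zero]
    · intro a x _ hx r
      have : r * (a • x) = (r * a) * x := by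
        rw [smul_eq_mul]; ring
      rw [this, hx]
  simpa using H 1

variable (Φ : Finset (Fin n → ℕ))

/-- bound beyond Φ in direction i -/
def Ni (i : Fin n) : ℕ := Φ.sup (fun l => l i) + 1

lemma single_Ni_not_mem (i : Fin n) : Pi.single i (Ni Φ i) ∉ Φ := by
  intro h
  have h2 : Ni Φ i ≤ Φ.sup (fun l => l i) := by
    simpa using Finset.le_sup (f := fun l => l i) h
  exact Nat.not_succ_le_self _ h2

/-- quotient map to MvPolynomial mod nmon -/
def mkA : MvPolynomial (Fin n) ℂ →ₐ[ℂ] (MvPolynomial (Fin n) ℂ ⧸ nmon Φ) :=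
  Ideal.Quotient.mkₐ ℂ (nmon Φ)

lemma mkA_monomial_zero {μ : Fin n → ℕ} (hμ : μ ∉ Φ) :
    mkA Φ (monomial (fsupp μ) (1:ℂ)) = 0 := by
  rw [mkA, Ideal.Quotient.mkₐ_eq_mk, Ideal.Quotient.eq_zero_iff_mem]
  exact Ideal.subset_span ⟨μ, hμ, rfl⟩

lemma fsupp_single (i : Fin n) (N : ℕ) : fsupp (Pi.single i N) = Finsupp.single i N := by
  ext a
  simp [fsupp_apply, Finsupp.single_apply, Pi.single_apply, eq_comm]

lemma mkA_X_pow_zero (i : Fin n) : mkA Φ (X i ^ Ni Φ i) = 0 := by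
  rw [X_pow_eq_monomial, ← fsupp_single]
  exact mkA_monomial_zero Φ (single_Ni_not_mem Φ i)

lemma mkA_geom (i : Fin n) :
    mkA Φ (1 + X i) * mkA Φ (∑ j ∈ range (Ni Φ i), (-(X i))^j) = 1 := by
  have h := geom_sum_mul (-(X i) : MvPolynomial (Fin n) ℂ) (Ni Φ i)
  have h2 : ((1 : MvPolynomial (Fin n) ℂ) + X i) * (∑ j ∈ range (Ni Φ i), (-(X i))^j)
      = 1 - (-(X i))^(Ni Φ i) := by
    linear_combination -h
  rw [← map_mul, h2, map_sub, map_one, neg_pow, map_mul, map_pow, map_neg, map_one,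
      mkA_X_pow_zero, mul_zero, sub_zero]

/-- the unit 1 + X i in the quotient -/
def ue (i : Fin n) : (MvPolynomial (Fin n) ℂ ⧸ nmon Φ)ˣ where
  val := mkA Φ (1 + X i)
  inv := mkA Φ (∑ j ∈ range (Ni Φ i), (-(X i))^j)
  val_inv := mkA_geom Φ i
  inv_val := by rw [mul_comm]; exact mkA_geom Φ i

lemma mono_mul (u v : Fin n → ℤ) : mono u * mono v = mono (u + v) := by
  simp [mono, AddMonoidAlgebra.single_mul_single]

lemma mono_zero' : (mono (0 : Fin n → ℤ)) = 1 := rfl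

/-- lift character into the units of the quotient -/
def uhomA : Multiplicative (Fin n → ℤ) →* (MvPolynomial (Fin n) ℂ ⧸ nmon Φ)ˣ where
  toFun u := ∏ i, (ue Φ i) ^ (Multiplicative.toAdd u i)
  map_one' := by simp
  map_mul' u v := by
    simp only [toAdd_mul, Pi.add_apply, zpow_add, Finset.prod_mul_distrib]

/-- the algebra map from Laurent polynomials -/
def psi : Laurent n →ₐ[ℂ] (MvPolynomial (Fin n) ℂ ⧸ nmon Φ) :=
  AddMonoidAlgebra.lift ℂ _ (Fin n → ℤ) ((Units.coeHom _).comp (uhomA Φ))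

lemma psi_mono (v : Fin n → ℤ) :
    psi Φ (mono v) = ((∏ i, (ue Φ i) ^ (v i) : (MvPolynomial (Fin n) ℂ ⧸ nmon Φ)ˣ) :
      (MvPolynomial (Fin n) ℂ ⧸ nmon Φ)) := by
  rw [psi, mono, AddMonoidAlgebra.lift_single]
  simp [uhomA]

lemma psi_mono_single (i : Fin n) :
    psi Φ (mono (Pi.single i 1)) = mkA Φ (1 + X i) := by
  rw [psi_mono]
  rw [Finset.prod_eq_single i]
  · simp [ue]
  · intro b _ hb
    rw [Pi.single_eq_of_ne hb, zpow_zero]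
  · simp

lemma prod_X_pow_eq (μ : Fin n → ℕ) :
    (∏ i, X i ^ μ i : MvPolynomial (Fin n) ℂ) = monomial (fsupp μ) 1 := by
  have h : ∀ s : Finset (Fin n),
      (∏ i ∈ s, X i ^ μ i : MvPolynomial (Fin n) ℂ)
        = monomial (∑ i ∈ s, Finsupp.single i (μ i)) 1 := by
    intro s
    induction s using Finset.induction_on with
    | empty => simp
    | insert _ _ hx ih =>
      rw [Finset.prod_insert hx, Finset.sum_insert hx, ih, X_pow_eq_monomial,
        monomial_mul, one_mul]
  have hs : (∑ i : Fin n, Finsupp.single i (μ i)) = fsupp μ := by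
    ext a
    rw [Finset.sum_apply']
    rw [Finset.sum_eq_single a]
    · simp [fsupp_apply]
    · intro b _ hb
      rw [Finsupp.single_apply, if_neg hb]
    · simp
  rw [h univ, hs]

lemma psi_xSubOnePow (μ : Fin n → ℕ) :
    psi Φ (xSubOnePow μ) = mkA Φ (monomial (fsupp μ) 1) := by
  rw [xSubOnePow, map_prod]
  have : ∀ i : Fin n, psi Φ ((mono (Pi.single i 1) - 1) ^ μ i)
      = mkA Φ (X i ^ μ i) := by
    intro i
    rw [map_pow, map_sub, map_one, psi_mono_single]
    have hx : mkA Φ (1 + X i) - 1 = mkA Φ (X i) := by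
      rw [map_add, map_one]; ring
    rw [hx, ← map_pow]
  simp_rw [this]
  rw [← map_prod, prod_X_pow_eq]

lemma idealN_le_ker :
    idealN Φ ≤ RingHom.ker (psi Φ : Laurent n →+* (MvPolynomial (Fin n) ℂ ⧸ nmon Φ)) := by
  rw [idealN, Ideal.span_le]
  rintro _ ⟨μ, hμ, rfl⟩
  rw [SetLike.mem_coe, RingHom.mem_ker]
  show psi Φ (xSubOnePow μ) = 0
  rw [psi_xSubOnePow]
  exact mkA_monomial_zero Φ hμ

/-- quotient map onto R/𝔫 -/
def piQ : Laurent n →ₐ[ℂ] (Laurent n ⧸ idealN Φ) := Ideal.Quotient.mkₐ ℂ (idealN Φ)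

lemma xSubOnePow_mem {μ : Fin n → ℕ} (hμ : μ ∉ Φ) : xSubOnePow μ ∈ idealN Φ :=
  Ideal.subset_span ⟨μ, hμ, rfl⟩

lemma piQ_xSubOnePow_zero {μ : Fin n → ℕ} (hμ : μ ∉ Φ) : piQ Φ (xSubOnePow μ) = 0 := by
  rw [piQ, Ideal.Quotient.mkₐ_eq_mk, Ideal.Quotient.eq_zero_iff_mem]
  exact xSubOnePow_mem Φ hμ

/-- casting ℕⁿ into ℤⁿ -/
def intify (v : Fin n → ℕ) : Fin n → ℤ := fun k => (v k : ℤ)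

lemma intify_single (i : Fin n) (t : ℕ) :
    intify (Pi.single i t) = Pi.single i (t : ℤ) := by
  funext k
  simp [intify, Pi.single_apply]

lemma mono_single_nat (i : Fin n) (t : ℕ) :
    mono (Pi.single i (t : ℤ)) = mono (Pi.single i 1) ^ t := by
  rw [mono, mono, AddMonoidAlgebra.single_pow, one_pow]
  congr 1
  funext k
  simp [Pi.single_apply]

lemma mono_prod (w : Fin n → (Fin n → ℤ)) :
    (∏ i, mono (w i) : Laurent n) = mono (∑ i, w i) := by
  have h : ∀ s : Finset (Fin n), (∏ i ∈ s, mono (w i) : Laurent n) = mono (∑ i ∈ s, w i) := by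
    intro s
    induction s using Finset.induction_on with
    | empty => simp [mono_zero']
    | insert _ _ hx ih =>
      rw [Finset.prod_insert hx, Finset.sum_insert hx, ih, mono_mul]
  exact h univ

lemma mono_eq_prod_single (u : Fin n → ℤ) :
    mono u = ∏ i, mono (Pi.single i (u i)) := by
  rw [mono_prod, Finset.univ_sum_single]

lemma xSubOnePow_single (i : Fin n) (N : ℕ) :
    xSubOnePow (Pi.single i N) = ((mono (Pi.single i 1) - 1 : Laurent n)) ^ N := by
  rw [xSubOnePow, Finset.prod_eq_single i]
  · rw [Pi.single_eq_same]
  · intro b _ hb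
    rw [Pi.single_eq_of_ne hb, pow_zero]
  · simp

/-- binomial expansion of a monomial -/
lemma mono_intify_eq (u : Fin n → ℕ) :
    mono (intify u) = ∑ lam ∈ Fintype.piFinset (fun i => range (u i + 1)),
      (((∏ i, (u i).choose (lam i)) : ℕ) : Laurent n) * xSubOnePow lam := by
  have h1 : mono (intify u) = ∏ i, (((mono (Pi.single i 1) - 1) : Laurent n) + 1) ^ (u i) := by
    rw [mono_eq_prod_single]
    apply Finset.prod_congr rfl
    intro i _
    rw [sub_add_cancel]
    show mono (Pi.single i (intify u i)) = _
    rw [intify, ← mono_single_nat]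
  rw [h1]
  have h2 : ∀ i : Fin n, (((mono (Pi.single i 1) - 1) : Laurent n) + 1) ^ (u i)
      = ∑ j ∈ range (u i + 1), ((mono (Pi.single i 1) - 1 : Laurent n)) ^ j
          * (((u i).choose j : ℕ) : Laurent n) := by
    intro i
    rw [add_pow]
    apply Finset.sum_congr rfl
    intro j _
    rw [one_pow, mul_one]
  simp_rw [h2]
  rw [Finset.prod_univ_sum]
  apply Finset.sum_congr rfl
  intro lam _
  rw [Finset.prod_mul_distrib, Nat.cast_prod]
  rw [mul_comm]
  rfl

/-- the image of a monomial in the quotient, as a Φ-combination -/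
lemma piQ_mono_eq (u : Fin n → ℕ) :
    piQ Φ (mono (intify u)) = ∑ lam ∈ Φ,
      (((∏ i, (u i).choose (lam i)) : ℕ) : ℂ) • piQ Φ (xSubOnePow lam) := by
  classical
  rw [mono_intify_eq, map_sum]
  have hterm : ∀ lam : Fin n → ℕ,
      piQ Φ ((((∏ i, (u i).choose (lam i)) : ℕ) : Laurent n) * xSubOnePow lam)
      = (((∏ i, (u i).choose (lam i)) : ℕ) : ℂ) • piQ Φ (xSubOnePow lam) := by
    intro lam
    rw [map_mul, map_natCast, Nat.cast_smul_eq_nsmul, nsmul_eq_mul]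
  simp_rw [hterm]
  rw [← Finset.sum_filter_of_ne (s := Fintype.piFinset (fun i => range (u i + 1)))
      (p := fun lam => lam ∈ Φ)]
  rotate_left
  · intro lam _ hne
    by_contra hmem
    exact hne (by rw [piQ_xSubOnePow_zero Φ hmem, smul_zero])
  rw [← Finset.sum_filter_of_ne (s := Φ)
      (p := fun lam => lam ∈ Fintype.piFinset (fun i => range (u i + 1)))]
  rotate_left
  · intro lam _ hne
    by_contra hmem
    apply hne
    rw [Fintype.mem_piFinset] at hmem
    push_neg at hmem
    obtain ⟨i, hi⟩ := hmem
    rw [Finset.mem_range] at hi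
    push_neg at hi
    have : (u i).choose (lam i) = 0 := Nat.choose_eq_zero_of_lt (by omega)
    rw [Finset.prod_eq_zero (Finset.mem_univ i) this]
    simp
  apply Finset.sum_congr
  · ext lam
    simp only [Finset.mem_filter, Fintype.mem_piFinset]
    tauto
  · intro _ _; rfl

/-- the candidate basis family of R/𝔫 -/
def bfam : {l // l ∈ Φ} → (Laurent n ⧸ idealN Φ) := fun lam => piQ Φ (xSubOnePow lam.1)

lemma piQ_mono_mem_span (u : Fin n → ℕ) :
    piQ Φ (mono (intify u)) ∈ Submodule.span ℂ (Set.range (bfam Φ)) := by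
  rw [piQ_mono_eq, ← Finset.sum_attach Φ
    (fun lam => (((∏ i, (u i).choose (lam i)) : ℕ) : ℂ) • piQ Φ (xSubOnePow lam))]
  exact Submodule.sum_mem _ fun lam _ =>
    Submodule.smul_mem _ _ (Submodule.subset_span ⟨lam, rfl⟩)

/-- the span of monomials with nonnegative exponents -/
def polSpan : Submodule ℂ (Laurent n) :=
  Submodule.span ℂ {f : Laurent n | ∃ v : Fin n → ℕ, f = mono (intify v)}

lemma polSpan_mul {p q : Laurent n} (hp : p ∈ polSpan (n := n)) (hq : q ∈ polSpan) :
    p * q ∈ polSpan := by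
  have h : polSpan (n := n) * polSpan ≤ polSpan := by
    rw [polSpan, Submodule.span_mul_span]
    apply Submodule.span_le.mpr
    rintro _ ⟨a, ⟨v, rfl⟩, b, ⟨w, rfl⟩, rfl⟩
    refine Submodule.subset_span ⟨v + w, ?_⟩
    show mono (intify v) * mono (intify w) = mono (intify (v + w))
    have hvw : intify v + intify w = intify (v + w) := by
      funext k; simp [intify]
    rw [mono_mul, hvw]
  exact h (Submodule.mul_mem_mul hp hq)

lemma one_mem_polSpan : (1 : Laurent n) ∈ polSpan := by
  refine Submodule.subset_span ⟨0, ?_⟩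
  have h0 : intify (0 : Fin n → ℕ) = 0 := by funext k; simp [intify]
  rw [h0, mono_zero']

lemma pow_mem_polSpan {p : Laurent n} (hp : p ∈ polSpan) (t : ℕ) : p ^ t ∈ polSpan := by
  induction t with
  | zero => rw [pow_zero]; exact one_mem_polSpan
  | succ t ih => rw [pow_succ]; exact polSpan_mul ih hp

lemma mono_single_one_mem : mono (Pi.single i (1:ℤ)) ∈ polSpan := by
  refine Submodule.subset_span ⟨Pi.single i 1, ?_⟩
  rw [intify_single]
  norm_num

lemma piQ_polSpan_mem {p : Laurent n} (hp : p ∈ polSpan) :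
    piQ Φ p ∈ Submodule.span ℂ (Set.range (bfam Φ)) := by
  refine Submodule.span_induction ?_ ?_ ?_ ?_ hp
  · rintro _ ⟨v, rfl⟩
    exact piQ_mono_mem_span Φ v
  · rw [map_zero]; exact Submodule.zero_mem _
  · intro a b _ _ ha hb
    rw [map_add]; exact Submodule.add_mem _ ha hb
  · intro c x _ hx
    rw [map_smul]; exact Submodule.smul_mem _ _ hx

/-- the geometric-series inverse of x_i -/
def hpi (i : Fin n) : Laurent n :=
  ∑ j ∈ range (Ni Φ i), (1 - mono (Pi.single i 1)) ^ j

lemma hpi_mem_polSpan (i : Fin n) : hpi Φ i ∈ polSpan := by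
  apply Submodule.sum_mem
  intro j _
  apply pow_mem_polSpan
  exact Submodule.sub_mem _ one_mem_polSpan mono_single_one_mem

lemma piQ_x_hpi (i : Fin n) :
    piQ Φ (mono (Pi.single i 1)) * piQ Φ (hpi Φ i) = 1 := by
  have h := geom_sum_mul (1 - mono (Pi.single i 1) : Laurent n) (Ni Φ i)
  have h2 : mono (Pi.single i 1) * hpi Φ i
      = 1 - (1 - mono (Pi.single i 1) : Laurent n) ^ (Ni Φ i) := by
    rw [hpi]
    linear_combination -h
  rw [← map_mul, h2, map_sub, map_one]
  have h3 : ((1 - mono (Pi.single i 1) : Laurent n)) ^ (Ni Φ i)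
      = (-1)^(Ni Φ i) * xSubOnePow (Pi.single i (Ni Φ i)) := by
    rw [xSubOnePow_single, ← mul_pow]
    congr 1
    ring
  rw [h3, map_mul, piQ_xSubOnePow_zero Φ (single_Ni_not_mem Φ i), mul_zero, sub_zero]

lemma exists_pol_rep (i : Fin n) (m : ℤ) :
    ∃ p ∈ polSpan, piQ Φ (mono (Pi.single i m)) = piQ Φ p := by
  rcases le_or_gt 0 m with hm | hm
  · refine ⟨mono (intify (Pi.single i m.toNat)), Submodule.subset_span ⟨_, rfl⟩, ?_⟩
    rw [intify_single]
    congr 2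
    funext k
    simp [Pi.single_apply]
    split
    · omega
    · rfl
  · set t := (-m).toNat with ht
    have key : mono (Pi.single i m) = mono (Pi.single i (-1 : ℤ)) ^ t := by
      rw [mono, mono, AddMonoidAlgebra.single_pow, one_pow]
      congr 1
      funext k
      by_cases hk : k = i
      · subst hk
        simp only [Pi.single_eq_same, Pi.smul_apply, nsmul_eq_mul]
        omega
      · simp [Pi.single_eq_of_ne hk]
    have hinv : piQ Φ (mono (Pi.single i (-1 : ℤ))) = piQ Φ (hpi Φ i) := by
      have h1 : mono (Pi.single i (-1 : ℤ)) * mono (Pi.single i (1 : ℤ)) = 1 := by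
        rw [mono_mul, ← Pi.single_add]
        have he : (-1 + 1 : ℤ) = 0 := by ring
        rw [he, Pi.single_zero, mono_zero']
      calc piQ Φ (mono (Pi.single i (-1:ℤ)))
          = piQ Φ (mono (Pi.single i (-1:ℤ)))
            * (piQ Φ (mono (Pi.single i 1)) * piQ Φ (hpi Φ i)) := by
            rw [piQ_x_hpi, mul_one]
        _ = piQ Φ (mono (Pi.single i (-1:ℤ)) * mono (Pi.single i 1)) * piQ Φ (hpi Φ i) := by
            rw [map_mul]; ring
        _ = piQ Φ (hpi Φ i) := by rw [h1, map_one, one_mul]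
    refine ⟨hpi Φ i ^ t, pow_mem_polSpan (hpi_mem_polSpan Φ i) t, ?_⟩
    rw [key, map_pow, hinv, ← map_pow]

lemma piQ_mono_mem_span' (u : Fin n → ℤ) :
    piQ Φ (mono u) ∈ Submodule.span ℂ (Set.range (bfam Φ)) := by
  choose p hpmem hpeq using fun i => exists_pol_rep Φ i (u i)
  have : piQ Φ (mono u) = piQ Φ (∏ i, p i) := by
    rw [mono_eq_prod_single, map_prod, map_prod]
    exact Finset.prod_congr rfl fun i _ => hpeq i
  rw [this]
  apply piQ_polSpan_mem
  have : ∀ s : Finset (Fin n), (∏ i ∈ s, p i) ∈ polSpan (n := n) := by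
    intro s
    induction s using Finset.induction_on with
    | empty => simpa using one_mem_polSpan
    | insert _ _ hx ih => rw [Finset.prod_insert hx]; exact polSpan_mul (hpmem _) ih
  exact this univ

lemma bfam_span_top : Submodule.span ℂ (Set.range (bfam Φ)) = ⊤ := by
  rw [eq_top_iff]
  rintro q -
  obtain ⟨f, rfl⟩ : ∃ f, piQ Φ f = q := by
    obtain ⟨f, hf⟩ := Ideal.Quotient.mk_surjective q
    exact ⟨f, by rw [piQ, Ideal.Quotient.mkₐ_eq_mk]; exact hf⟩
  induction f using AddMonoidAlgebra.induction_linear with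
  | zero => rw [map_zero]; exact Submodule.zero_mem _
  | add a b ha hb => rw [map_add]; exact Submodule.add_mem _ ha hb
  | single a b =>
    have hs : (AddMonoidAlgebra.single a b : Laurent n) = b • mono a := by
      show (AddMonoidAlgebra.single a b : Laurent n) = b • mono a
      rw [mono, AddMonoidAlgebra.smul_single', mul_one]
    rw [hs, map_smul]
    exact Submodule.smul_mem _ _ (piQ_mono_mem_span' Φ a)

lemma bfam_indep
    (hdc : ∀ l ∈ Φ, ∀ l' : Fin n → ℕ, (∀ i, l' i ≤ l i) → l' ∈ Φ) :
    LinearIndependent ℂ (bfam Φ) := by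
  rw [Fintype.linearIndependent_iff]
  intro g hg
  set w : Laurent n := ∑ lam : {l // l ∈ Φ}, g lam • xSubOnePow lam.1 with hw
  have hwmem : w ∈ idealN Φ := by
    have : piQ Φ w = 0 := by
      rw [hw, map_sum]
      simp_rw [map_smul]
      exact hg
    rwa [piQ, Ideal.Quotient.mkₐ_eq_mk, Ideal.Quotient.eq_zero_iff_mem] at this
  have hpsiw : psi Φ w = 0 := idealN_le_ker Φ hwmem
  rw [hw, map_sum] at hpsiw
  simp_rw [map_smul, psi_xSubOnePow] at hpsiw
  have hq : (∑ lam : {l // l ∈ Φ}, g lam • monomial (fsupp lam.1) (1:ℂ)) ∈ nmon Φ := by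
    have : mkA Φ (∑ lam : {l // l ∈ Φ}, g lam • monomial (fsupp lam.1) (1:ℂ)) = 0 := by
      rw [map_sum]
      simp_rw [map_smul]
      exact hpsiw
    rwa [mkA, Ideal.Quotient.mkₐ_eq_mk, Ideal.Quotient.eq_zero_iff_mem] at this
  intro lam0
  have hco := coeff_zero_of_mem_nmon hdc hq lam0.2
  rw [← hco]
  rw [coeff_sum]
  rw [Finset.sum_eq_single lam0]
  · rw [coeff_smul, coeff_monomial, if_pos rfl]
    simp
  · intro b _ hb
    rw [coeff_smul, coeff_monomial, if_neg, smul_zero]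
    intro hc
    exact hb (Subtype.ext (fsupp_inj hc))
  · simp

/-- the basis of R/𝔫 given by the (x-1)^λ, λ ∈ Φ -/
def basisQ (hdc : ∀ l ∈ Φ, ∀ l' : Fin n → ℕ, (∀ i, l' i ≤ l i) → l' ∈ Φ) :
    Module.Basis {l // l ∈ Φ} ℂ (Laurent n ⧸ idealN Φ) :=
  Module.Basis.mk (bfam_indep Φ hdc) (le_of_eq (bfam_span_top Φ).symm)

lemma equivFun_piQ_mono (hdc : ∀ l ∈ Φ, ∀ l' : Fin n → ℕ, (∀ i, l' i ≤ l i) → l' ∈ Φ)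
    (v : Fin n → ℕ) :
    (basisQ Φ hdc).equivFun (piQ Φ (mono (intify v)))
      = fun lam : {l // l ∈ Φ} => (((∏ i, (v i).choose (lam.1 i)) : ℕ) : ℂ) := by
  have h1 : piQ Φ (mono (intify v)) = (basisQ Φ hdc).equivFun.symm
      (fun lam : {l // l ∈ Φ} => (((∏ i, (v i).choose (lam.1 i)) : ℕ) : ℂ)) := by
    rw [Module.Basis.equivFun_symm_apply]
    rw [piQ_mono_eq Φ v, ← Finset.sum_attach Φ (fun lam =>
      (((∏ i, (v i).choose (lam i)) : ℕ) : ℂ) • piQ Φ (xSubOnePow lam))]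
    apply Finset.sum_congr rfl
    intro lam _
    congr 1
    rw [basisQ, Module.Basis.coe_mk]
    rfl
  rw [h1, LinearEquiv.apply_symm_apply]

lemma part1_iff (hdc : ∀ l ∈ Φ, ∀ l' : Fin n → ℕ, (∀ i, l' i ≤ l i) → l' ∈ Φ)
    (S : Set (Fin n → ℝ)) (hS : S ⊆ nonnegOrthant n) :
    (¬ Function.Surjective fun f : VS S =>
        Ideal.Quotient.mk (idealN Φ) (f : Laurent n)) ↔
      colRank (binomMat Φ S) < Φ.card := by
  classical
  set b := basisQ Φ hdc with hb
  set L : VS S →ₗ[ℂ] (Laurent n ⧸ idealN Φ) :=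
    (piQ Φ).toLinearMap.comp (VS S).subtype with hL
  set L' : VS S →ₗ[ℂ] ({l // l ∈ Φ} → ℂ) :=
    (b.equivFun : (Laurent n ⧸ idealN Φ) ≃ₗ[ℂ] ({l // l ∈ Φ} → ℂ)).toLinearMap.comp L with hL'
  have hfun : (fun f : VS S => Ideal.Quotient.mk (idealN Φ) (f : Laurent n)) = ⇑L := rfl
  have hsurj : (¬ Function.Surjective fun f : VS S =>
      Ideal.Quotient.mk (idealN Φ) (f : Laurent n)) ↔ ¬ Function.Surjective ⇑L' := by
    rw [hfun]
    have hcomp : ⇑L' = ⇑b.equivFun.toEquiv ∘ ⇑L := rfl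
    rw [hcomp, Equiv.comp_surjective]
  have hrange : LinearMap.range L' = Submodule.span ℂ
      (Set.range fun c : {u : Fin n → ℕ // castN u ∈ S} =>
        fun i : {l // l ∈ Φ} => binomMat Φ S i c) := by
    rw [hL', LinearMap.range_comp, hL, LinearMap.range_comp, Submodule.range_subtype]
    rw [VS, Submodule.map_span, Submodule.map_span]
    congr 1
    ext z
    constructor
    · rintro ⟨_, ⟨y, ⟨u, hu, rfl⟩, rfl⟩, rfl⟩
      have hnn : ∀ i, 0 ≤ u i := by
        intro i
        have := hS hu i
        rw [castR] at this
        exact_mod_cast this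
      have hiu : (intify fun i => (u i).toNat) = u := by
        funext i
        exact Int.toNat_of_nonneg (hnn i)
      refine ⟨⟨fun i => (u i).toNat, ?_⟩, ?_⟩
      · have hc : castN (fun i => (u i).toNat) = castR u := by
          funext i
          show (((u i).toNat : ℕ) : ℝ) = ((u i : ℤ) : ℝ)
          exact_mod_cast congrArg (fun z : ℤ => (z : ℝ)) (Int.toNat_of_nonneg (hnn i))
        rw [hc]; exact hu
      · show (fun lam : {l // l ∈ Φ} =>
          binomMat Φ S lam ⟨fun i => (u i).toNat, _⟩) = b.equivFun ((piQ Φ) (mono u))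
        conv_rhs => rw [← hiu]
        rw [hb, equivFun_piQ_mono Φ hdc]
        rfl
    · rintro ⟨u, rfl⟩
      refine ⟨piQ Φ (mono (intify u.1)), ⟨mono (intify u.1), ⟨intify u.1, ?_, rfl⟩, rfl⟩, ?_⟩
      · have hc : castR (intify u.1) = castN u.1 := by
          funext i; simp [castR, castN, intify]
        rw [hc]; exact u.2
      · show b.equivFun ((piQ Φ) (mono (intify u.1))) = _
        rw [hb, equivFun_piQ_mono Φ hdc]
        rfl
  have hdim : Module.finrank ℂ ({l // l ∈ Φ} → ℂ) = Φ.card := by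
    rw [Module.finrank_fintype_fun_eq_card, Fintype.card_coe]
  have hcr : colRank (binomMat Φ S) = Module.finrank ℂ (Submodule.span ℂ
      (Set.range fun c : {u : Fin n → ℕ // castN u ∈ S} =>
        fun i : {l // l ∈ Φ} => binomMat Φ S i c)) := rfl
  have hle : colRank (binomMat Φ S) ≤ Φ.card := by
    rw [hcr, ← hdim]
    exact Submodule.finrank_le _
  have htop : Function.Surjective ⇑L' ↔ LinearMap.range L' = ⊤ := LinearMap.range_eq_top.symm
  rw [hsurj, htop, hrange]
  constructor
  · intro hne
    refine lt_of_le_of_ne hle fun heq => hne ?_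
    apply Submodule.eq_top_of_finrank_eq
    rw [← hcr, heq, hdim]
  · intro hlt hteq
    rw [hcr, hteq, finrank_top, hdim] at hlt
    exact lt_irrefl _ hlt


-- Fact A
lemma li_iff_span_top {K V ι : Type*} [Field K] [AddCommGroup V] [Module K V]
    [Fintype ι] [FiniteDimensional K V] (v : ι → V)
    (h : Fintype.card ι = Module.finrank K V) :
    LinearIndependent K v ↔ Submodule.span K (Set.range v) = ⊤ := by
  rw [linearIndependent_iff_card_eq_finrank_span, Set.finrank]
  constructor
  · intro hc
    exact Submodule.eq_top_of_finrank_eq (by omega)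
  · intro ht
    rw [ht, finrank_top]; exact h

-- P1
lemma P1 (j : ℕ) : ∃ a : ℕ → ℝ, ∀ m : ℕ,
    ((m.choose j : ℕ) : ℝ) = ∑ i ∈ range (j+1), a i * (m : ℝ)^i := by
  refine ⟨fun i => ((j.factorial : ℝ))⁻¹ * (descPochhammer ℝ j).coeff i, fun m => ?_⟩
  have h1 : (descPochhammer ℝ j).eval (m : ℝ) = (m.descFactorial j : ℝ) :=
    descPochhammer_eval_eq_descFactorial ℝ m j
  have h2 : (m.descFactorial j : ℝ) = (j.factorial : ℝ) * (m.choose j : ℝ) := by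
    rw_mod_cast [Nat.descFactorial_eq_factorial_mul_choose]
  have h3 : (descPochhammer ℝ j).eval (m : ℝ)
      = ∑ i ∈ range (j+1), (descPochhammer ℝ j).coeff i * (m:ℝ)^i := by
    rw [Polynomial.eval_eq_sum_range]
    rw [descPochhammer_natDegree]
  have hf : (j.factorial : ℝ) ≠ 0 := by positivity
  have goal : ((m.choose j : ℕ) : ℝ) = (j.factorial : ℝ)⁻¹ * (descPochhammer ℝ j).eval (m:ℝ) := by
    rw [h1, h2]; field_simp
  rw [goal, h3, mul_sum]
  exact sum_congr rfl fun i _ => by ring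

-- linear independence of choose functions
lemma li_choose (j : ℕ) :
    LinearIndependent ℝ (fun i : Fin (j+1) => fun m : ℕ => ((m.choose (i:ℕ) : ℕ) : ℝ)) := by
  rw [Fintype.linearIndependent_iff]
  intro g hg
  have key : ∀ N : ℕ, ∀ i : Fin (j+1), (i : ℕ) = N → g i = 0 := by
    intro N
    induction N using Nat.strong_induction_on with
    | _ N ih =>
      intro i hi
      have h := congrFun hg N
      simp only [Finset.sum_apply, Pi.smul_apply, smul_eq_mul, Pi.zero_apply] at h
      rw [Finset.sum_eq_single i] at h
      · subst hi; simpa using h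
      · intro b _ hb
        rcases lt_trichotomy (b : ℕ) N with hlt | heq | hgt
        · rw [ih _ hlt b rfl, zero_mul]
        · exact absurd (Fin.ext (heq.trans hi.symm)) hb
        · rw [Nat.choose_eq_zero_of_lt hgt]; simp
      · simp
  intro i; exact key (i : ℕ) i rfl

-- linear independence of power functions
lemma li_pow (j : ℕ) :
    LinearIndependent ℝ (fun i : Fin (j+1) => fun m : ℕ => ((m : ℝ)) ^ (i : ℕ)) := by
  rw [Fintype.linearIndependent_iff]
  intro g hg
  set q : Polynomial ℝ := ∑ i : Fin (j+1), Polynomial.C (g i) * Polynomial.X ^ (i : ℕ) with hq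
  have hq0 : q = 0 := by
    apply Polynomial.eq_zero_of_infinite_isRoot
    apply Set.Infinite.mono (s := Set.range ((↑) : ℕ → ℝ))
    · rintro x ⟨m, rfl⟩
      have h := congrFun hg m
      simp only [Finset.sum_apply, Pi.smul_apply, smul_eq_mul, Pi.zero_apply] at h
      simp [q, Polynomial.IsRoot, Polynomial.eval_finset_sum, h]
    · exact Set.infinite_range_of_injective Nat.cast_injective
  intro i
  have : q.coeff (i : ℕ) = g i := by
    rw [hq, Polynomial.finset_sum_coeff, Finset.sum_eq_single i]
    · simp
    · intro b _ hb
      simp only [Polynomial.coeff_C_mul, Polynomial.coeff_X_pow]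
      rw [if_neg (fun hc => hb (Fin.ext hc.symm)), mul_zero]
    · simp
  rw [← this, hq0, Polynomial.coeff_zero]

-- P2
lemma P2 (j : ℕ) : ∃ b : ℕ → ℝ, ∀ m : ℕ,
    (m : ℝ)^j = ∑ i ∈ range (j+1), b i * ((m.choose i : ℕ) : ℝ) := by
  classical
  set fc : Fin (j+1) → (ℕ → ℝ) := fun i => fun m : ℕ => ((m.choose (i:ℕ) : ℕ) : ℝ) with hfc
  set fp : Fin (j+1) → (ℕ → ℝ) := fun i => fun m : ℕ => ((m : ℝ)) ^ (i : ℕ) with hfp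
  have hle : Submodule.span ℝ (Set.range fc) ≤ Submodule.span ℝ (Set.range fp) := by
    rw [Submodule.span_le]
    rintro _ ⟨i, rfl⟩
    obtain ⟨a, ha⟩ := P1 (i : ℕ)
    have : fc i = ∑ i' : Fin (j+1), (if (i':ℕ) < (i:ℕ)+1 then a (i':ℕ) else 0) • fp i' := by
      funext m
      simp only [Finset.sum_apply, Pi.smul_apply, smul_eq_mul, hfc, hfp]
      rw [ha m, ← Finset.sum_range (fun i' => (if i' < (i:ℕ)+1 then a i' else 0) * (m:ℝ)^i')]
      have e1 : ∑ x ∈ range ((i:ℕ)+1), a x * (m:ℝ)^x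
          = ∑ x ∈ range ((i:ℕ)+1), (if x < (i:ℕ)+1 then a x else 0) * (m:ℝ)^x := by
        apply Finset.sum_congr rfl
        intro x hx; rw [mem_range] at hx; rw [if_pos hx]
      rw [e1]
      apply Finset.sum_subset
      · intro x hx; rw [mem_range] at *; omega
      · intro x _ hx
        rw [mem_range] at hx
        rw [if_neg hx, zero_mul]
    rw [SetLike.mem_coe, this]
    exact Submodule.sum_mem _ fun i' _ =>
      Submodule.smul_mem _ _ (Submodule.subset_span ⟨_, rfl⟩)
  haveI : FiniteDimensional ℝ (Submodule.span ℝ (Set.range fp)) :=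
    FiniteDimensional.span_of_finite ℝ (Set.finite_range _)
  have heq : Submodule.span ℝ (Set.range fc) = Submodule.span ℝ (Set.range fp) := by
    apply Submodule.eq_of_le_of_finrank_eq hle
    rw [finrank_span_eq_card (li_choose j), finrank_span_eq_card (li_pow j)]
  have hmem : fp ⟨j, by omega⟩ ∈ Submodule.span ℝ (Set.range fc) := by
    rw [heq]; exact Submodule.subset_span ⟨_, rfl⟩
  rw [Finsupp.mem_span_range_iff_exists_finsupp] at hmem
  obtain ⟨c, hc⟩ := hmem
  refine ⟨fun i => if h : i < j + 1 then c ⟨i, h⟩ else 0, fun m => ?_⟩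
  have := congrFun hc m
  rw [Finsupp.sum_fintype] at this
  · simp only [Finset.sum_apply, Pi.smul_apply, smul_eq_mul, hfc, hfp] at this
    rw [← this, Finset.sum_range fun i => _]
    · apply Finset.sum_congr rfl
      intro i _
      simp [i.isLt]
  · intro _; rw [zero_smul]

lemma U_finite {S : Set (Fin n → ℝ)} (hbdd : Bornology.IsBounded S) :
    Finite {u : Fin n → ℕ // castN u ∈ S} := by
  obtain ⟨r, hr⟩ := hbdd.subset_closedBall 0
  set N := ⌊r⌋₊ with hN
  have hsub : {u : Fin n → ℕ | castN u ∈ S} ⊆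
      ↑(Fintype.piFinset fun _ : Fin n => Finset.range (N + 1)) := by
    intro u hu
    simp only [Finset.coe_sort_coe, Finset.mem_coe, Fintype.mem_piFinset, Finset.mem_range]
    intro i
    have h1 : dist (castN u) 0 ≤ r := Metric.mem_closedBall.mp (hr hu)
    rw [dist_zero_right] at h1
    have h2 : ‖castN u i‖ ≤ ‖castN u‖ := norm_le_pi_norm (castN u) i
    have h3 : ((u i : ℕ) : ℝ) ≤ r := by
      have : ‖castN u i‖ = ((u i : ℕ) : ℝ) := by
        simp [castN, Real.norm_eq_abs, abs_of_nonneg]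
      rw [this] at h2
      linarith
    have := Nat.le_floor h3
    omega
  have hfin : {u : Fin n → ℕ | castN u ∈ S}.Finite :=
    Set.Finite.subset (Finset.finite_toSet _) hsub
  exact hfin.to_subtype

/-- product expansion lemma: membership in the span of the transformed family -/
lemma prod_span_mem {S : Set (Fin n → ℝ)}
    (hdc : ∀ l ∈ Φ, ∀ l' : Fin n → ℕ, (∀ i, l' i ≤ l i) → l' ∈ Φ)
    {lam : Fin n → ℕ} (hlam : lam ∈ Φ)
    (Fv G : ℕ → ℕ → ℝ) (c : ℕ → ℕ → ℝ)
    (hFG : ∀ j m, Fv j m = ∑ i ∈ range (j+1), c j i * G i m) :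
    (fun u : {u : Fin n → ℕ // castN u ∈ S} => ∏ k, Fv (lam k) (u.1 k)) ∈
      Submodule.span ℝ (Set.range fun mu : {l // l ∈ Φ} =>
        fun u : {u : Fin n → ℕ // castN u ∈ S} => ∏ k, G (mu.1 k) (u.1 k)) := by
  classical
  have hexp : (fun u : {u : Fin n → ℕ // castN u ∈ S} => ∏ k, Fv (lam k) (u.1 k))
      = ∑ mu ∈ Fintype.piFinset (fun k => range (lam k + 1)),
          (∏ k, c (lam k) (mu k)) •
            (fun u : {u : Fin n → ℕ // castN u ∈ S} => ∏ k, G (mu k) (u.1 k)) := by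
    funext u
    simp only [Finset.sum_apply, Pi.smul_apply, smul_eq_mul]
    calc ∏ k, Fv (lam k) (u.1 k)
        = ∏ k, ∑ i ∈ range (lam k + 1), c (lam k) i * G i (u.1 k) :=
          Finset.prod_congr rfl fun k _ => hFG (lam k) (u.1 k)
      _ = ∑ mu ∈ Fintype.piFinset (fun k => range (lam k + 1)),
            ∏ k, (c (lam k) (mu k) * G (mu k) (u.1 k)) := Finset.prod_univ_sum _ _
      _ = ∑ mu ∈ Fintype.piFinset (fun k => range (lam k + 1)),
            (∏ k, c (lam k) (mu k)) * ∏ k, G (mu k) (u.1 k) := by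
          exact Finset.sum_congr rfl fun mu _ => Finset.prod_mul_distrib
  rw [hexp]
  apply Submodule.sum_mem
  intro mu hmu
  have hmuΦ : mu ∈ Φ := by
    apply hdc lam hlam mu
    intro k
    have := Fintype.mem_piFinset.mp hmu k
    rw [Finset.mem_range] at this
    omega
  exact Submodule.smul_mem _ _ (Submodule.subset_span ⟨⟨mu, hmuΦ⟩, rfl⟩)

lemma eval_msum (c : {l // l ∈ Φ} → ℝ) (u : Fin n → ℕ) :
    MvPolynomial.eval (fun k => (u k : ℝ))
        (∑ lam : {l // l ∈ Φ}, c lam • monomial (fsupp lam.1) (1:ℝ))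
      = ∑ lam : {l // l ∈ Φ}, c lam * ∏ k, ((u k : ℝ)) ^ (lam.1 k) := by
  rw [map_sum]
  apply Finset.sum_congr rfl
  intro lam _
  rw [MvPolynomial.smul_eq_C_mul, map_mul, eval_C, eval_monomial]
  congr 1
  rw [one_mul, Finsupp.prod_fintype]
  · rfl
  · intro k; exact pow_zero _

lemma coeff_msum (c : {l // l ∈ Φ} → ℝ) (lam0 : {l // l ∈ Φ}) :
    coeff (fsupp lam0.1)
        (∑ lam : {l // l ∈ Φ}, c lam • monomial (fsupp lam.1) (1:ℝ)) = c lam0 := by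
  rw [coeff_sum, Finset.sum_eq_single lam0]
  · rw [coeff_smul, coeff_monomial, if_pos rfl]; simp
  · intro b _ hb
    rw [coeff_smul, coeff_monomial, if_neg, smul_zero]
    intro hc
    exact hb (Subtype.ext (fsupp_inj hc))
  · simp

/-- binomial-coefficient functions on S ∩ ℕⁿ -/
def BfamR (S : Set (Fin n → ℝ)) : {l // l ∈ Φ} → ({u : Fin n → ℕ // castN u ∈ S} → ℝ) :=
  fun lam u => ∏ k, (((u.1 k).choose (lam.1 k) : ℕ) : ℝ)

/-- monomial functions on S ∩ ℕⁿ -/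
def PfamR (S : Set (Fin n → ℝ)) : {l // l ∈ Φ} → ({u : Fin n → ℕ // castN u ∈ S} → ℝ) :=
  fun lam u => ∏ k, ((u.1 k : ℕ) : ℝ) ^ (lam.1 k)

lemma span_BP_eq (hdc : ∀ l ∈ Φ, ∀ l' : Fin n → ℕ, (∀ i, l' i ≤ l i) → l' ∈ Φ)
    (S : Set (Fin n → ℝ)) :
    Submodule.span ℝ (Set.range (BfamR Φ S)) = Submodule.span ℝ (Set.range (PfamR Φ S)) := by
  classical
  apply le_antisymm
  · rw [Submodule.span_le]
    rintro _ ⟨lam, rfl⟩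
    exact prod_span_mem (S := S) Φ hdc lam.2 (fun j m => ((m.choose j : ℕ) : ℝ))
      (fun i m => ((m : ℕ) : ℝ)^i) (fun j => (P1 j).choose) (fun j => (P1 j).choose_spec)
  · rw [Submodule.span_le]
    rintro _ ⟨lam, rfl⟩
    exact prod_span_mem (S := S) Φ hdc lam.2 (fun j m => ((m : ℕ) : ℝ)^j)
      (fun i m => ((m.choose i : ℕ) : ℝ)) (fun j => (P2 j).choose) (fun j => (P2 j).choose_spec)

lemma part2_iff (hdc : ∀ l ∈ Φ, ∀ l' : Fin n → ℕ, (∀ i, l' i ≤ l i) → l' ∈ Φ)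
    (S : Set (Fin n → ℝ)) (hbdd : Bornology.IsBounded S)
    (hcard : Nat.card {u : Fin n → ℕ // castN u ∈ S} = Φ.card) :
    colRank (binomMat Φ S) < Φ.card ↔
      ∃ f : MvPolynomial (Fin n) ℝ,
        f ∈ Submodule.span ℝ
          ((fun l : Fin n → ℕ =>
            MvPolynomial.monomial (Finsupp.equivFunOnFinite.symm l) (1 : ℝ)) '' ↑Φ) ∧
        f ≠ 0 ∧
        ∀ u : Fin n → ℕ, castN u ∈ S →
          MvPolynomial.eval (fun k => (u k : ℝ)) f = 0 := by
  classical
  haveI : Finite {u : Fin n → ℕ // castN u ∈ S} := U_finite hbdd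
  haveI : Fintype {u : Fin n → ℕ // castN u ∈ S} := Fintype.ofFinite _
  have hcardF : Fintype.card {u : Fin n → ℕ // castN u ∈ S} = Φ.card := by
    rw [← Nat.card_eq_fintype_card]; exact hcard
  have hcardΦ : Fintype.card {l // l ∈ Φ} = Φ.card := Fintype.card_coe Φ
  set e : {u : Fin n → ℕ // castN u ∈ S} ≃ {l // l ∈ Φ} :=
    Fintype.equivOfCardEq (by rw [hcardF, hcardΦ]) with he
  set cols : {u : Fin n → ℕ // castN u ∈ S} → ({l // l ∈ Φ} → ℂ) :=
    fun u lam => binomMat Φ S lam u with hcols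
  have hdimC : Module.finrank ℂ ({l // l ∈ Φ} → ℂ) = Φ.card := by
    rw [Module.finrank_fintype_fun_eq_card, hcardΦ]
  have hdimR : Module.finrank ℝ ({u : Fin n → ℕ // castN u ∈ S} → ℝ) = Φ.card := by
    rw [Module.finrank_fintype_fun_eq_card, hcardF]
  -- Step A
  have hcr : colRank (binomMat Φ S)
      = Module.finrank ℂ (Submodule.span ℂ (Set.range cols)) := rfl
  have hle : colRank (binomMat Φ S) ≤ Φ.card := by
    rw [hcr, ← hdimC]; exact Submodule.finrank_le _
  have hliC := li_iff_span_top cols (by rw [hcardF, hdimC])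
  have stepA : colRank (binomMat Φ S) < Φ.card ↔ ¬ LinearIndependent ℂ cols := by
    constructor
    · intro hlt hLI
      rw [hliC] at hLI
      rw [hcr, hLI, finrank_top, hdimC] at hlt
      exact lt_irrefl _ hlt
    · intro hnLI
      refine lt_of_le_of_ne hle fun heq => hnLI ?_
      rw [hliC]
      apply Submodule.eq_top_of_finrank_eq
      rw [← hcr, heq, hdimC]
  -- Step B/C: complex determinant
  set Mr : Matrix {l // l ∈ Φ} {l // l ∈ Φ} ℝ :=
    Matrix.of (fun lam mu => BfamR Φ S lam (e.symm mu)) with hMr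
  set Mc : Matrix {l // l ∈ Φ} {l // l ∈ Φ} ℂ :=
    Matrix.of (fun lam mu => binomMat Φ S lam (e.symm mu)) with hMc
  have hmap : Mc = Mr.map (algebraMap ℝ ℂ) := by
    ext lam mu
    show binomMat Φ S lam (e.symm mu) = algebraMap ℝ ℂ (BfamR Φ S lam (e.symm mu))
    rw [binomMat, BfamR]
    push_cast
    rfl
  have stepB : (¬ LinearIndependent ℂ cols) ↔ Mc.det = 0 := by
    rw [← Matrix.exists_mulVec_eq_zero_iff]
    constructor
    · intro hnLI
      have hnLI2 : ¬ LinearIndependent ℂ (cols ∘ e.symm) := by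
        rwa [linearIndependent_equiv e.symm]
      rw [Fintype.not_linearIndependent_iff] at hnLI2
      obtain ⟨g, hsum, i0, hg0⟩ := hnLI2
      refine ⟨g, ?_, ?_⟩
      · intro hg; apply hg0; rw [hg]; rfl
      · funext lam
        have := congrFun hsum lam
        simp only [Finset.sum_apply, Pi.smul_apply, smul_eq_mul, Pi.zero_apply,
          Function.comp_apply] at this
        show (Mc.mulVec g) lam = 0
        rw [Matrix.mulVec, dotProduct]
        rw [← this]
        exact Finset.sum_congr rfl fun mu _ => mul_comm _ _
    · rintro ⟨g, hg, hsum⟩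
      intro hLI
      have hLI2 : LinearIndependent ℂ (cols ∘ e.symm) := by
        rwa [linearIndependent_equiv e.symm]
      rw [Fintype.linearIndependent_iff] at hLI2
      have : ∀ mu, g mu = 0 := by
        apply hLI2
        funext lam
        have := congrFun hsum lam
        rw [Matrix.mulVec, dotProduct, Pi.zero_apply] at this
        simp only [Finset.sum_apply, Pi.smul_apply, smul_eq_mul, Pi.zero_apply,
          Function.comp_apply]
        rw [← this]
        exact Finset.sum_congr rfl fun mu _ => mul_comm _ _
      exact hg (funext this)
  have hdet : Mc.det = algebraMap ℝ ℂ Mr.det := by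
    rw [hmap, RingHom.map_det, RingHom.mapMatrix_apply]
  have stepC : Mc.det = 0 ↔ Mr.det = 0 := by
    rw [hdet]
    constructor
    · intro h
      have h2 : algebraMap ℝ ℂ Mr.det = algebraMap ℝ ℂ 0 := by rw [h, map_zero]
      exact FaithfulSMul.algebraMap_injective ℝ ℂ h2
    · intro h; rw [h, map_zero]
  -- Step E: real rows
  have stepE : Mr.det = 0 ↔ ¬ LinearIndependent ℝ (BfamR Φ S) := by
    rw [← Matrix.det_transpose, ← Matrix.exists_mulVec_eq_zero_iff]
    constructor
    · rintro ⟨d, hd, hsum⟩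
      rw [Fintype.not_linearIndependent_iff]
      refine ⟨d, ?_, ?_⟩
      · funext u
        have := congrFun hsum (e u)
        rw [Matrix.mulVec, dotProduct, Pi.zero_apply] at this
        simp only [Matrix.transpose_apply] at this
        simp only [Finset.sum_apply, Pi.smul_apply, smul_eq_mul, Pi.zero_apply]
        have h2 : ∀ lam, Mr lam (e u) = BfamR Φ S lam u := by
          intro lam
          show BfamR Φ S lam (e.symm (e u)) = BfamR Φ S lam u
          rw [Equiv.symm_apply_apply]
        rw [← this]
        exact Finset.sum_congr rfl fun lam _ => by rw [h2, mul_comm]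
      · by_contra hall
        push_neg at hall
        exact hd (funext hall)
    · intro hnLI
      rw [Fintype.not_linearIndependent_iff] at hnLI
      obtain ⟨d, hsum, i0, hd0⟩ := hnLI
      refine ⟨d, fun hg => hd0 (by rw [hg]; rfl), ?_⟩
      funext mu
      have := congrFun hsum (e.symm mu)
      simp only [Finset.sum_apply, Pi.smul_apply, smul_eq_mul, Pi.zero_apply] at this
      show (Matrix.transpose Mr).mulVec d mu = 0
      rw [Matrix.mulVec, dotProduct]
      rw [← this]
      apply Finset.sum_congr rfl
      intro lam _
      rw [Matrix.transpose_apply, mul_comm]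
      rfl
  -- Step F
  have hliB := li_iff_span_top (BfamR Φ S) (by rw [hcardΦ, hdimR])
  have hliP := li_iff_span_top (PfamR Φ S) (by rw [hcardΦ, hdimR])
  have stepF : (¬ LinearIndependent ℝ (BfamR Φ S)) ↔ ¬ LinearIndependent ℝ (PfamR Φ S) := by
    rw [hliB, hliP, span_BP_eq Φ hdc S]
  -- Step G
  have stepG : (¬ LinearIndependent ℝ (PfamR Φ S)) ↔
      ∃ f : MvPolynomial (Fin n) ℝ,
        f ∈ Submodule.span ℝ
          ((fun l : Fin n → ℕ =>
            MvPolynomial.monomial (Finsupp.equivFunOnFinite.symm l) (1 : ℝ)) '' ↑Φ) ∧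
        f ≠ 0 ∧
        ∀ u : Fin n → ℕ, castN u ∈ S →
          MvPolynomial.eval (fun k => (u k : ℝ)) f = 0 := by
    have himg : ((fun l : Fin n → ℕ =>
          MvPolynomial.monomial (Finsupp.equivFunOnFinite.symm l) (1 : ℝ)) '' ↑Φ)
        = Set.range (fun lam : {l // l ∈ Φ} => monomial (fsupp lam.1) (1:ℝ)) := by
      rw [Set.image_eq_range]
      rfl
    constructor
    · intro hnLI
      rw [Fintype.not_linearIndependent_iff] at hnLI
      obtain ⟨g, hsum, i0, hg0⟩ := hnLI
      refine ⟨∑ lam : {l // l ∈ Φ}, g lam • monomial (fsupp lam.1) (1:ℝ), ?_, ?_, ?_⟩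
      · apply Submodule.sum_mem
        intro lam _
        apply Submodule.smul_mem
        rw [himg]
        exact Submodule.subset_span ⟨lam, rfl⟩
      · intro hf0
        apply hg0
        have := coeff_msum Φ g i0
        rw [hf0, coeff_zero] at this
        exact this.symm
      · intro u hu
        rw [eval_msum]
        have := congrFun hsum ⟨u, hu⟩
        simp only [Finset.sum_apply, Pi.smul_apply, smul_eq_mul, Pi.zero_apply] at this
        rw [← this]
        rfl
    · rintro ⟨f, hfmem, hf0, heval⟩
      rw [himg, Submodule.mem_span_range_iff_exists_fun] at hfmem
      obtain ⟨g, hg⟩ := hfmem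
      rw [Fintype.not_linearIndependent_iff]
      refine ⟨g, ?_, ?_⟩
      · funext u
        simp only [Finset.sum_apply, Pi.smul_apply, smul_eq_mul, Pi.zero_apply]
        have h1 := heval u.1 u.2
        rw [← hg, eval_msum] at h1
        rw [← h1]
        rfl
      · by_contra hall
        push_neg at hall
        apply hf0
        rw [← hg]
        apply Finset.sum_eq_zero
        intro lam _
        rw [hall lam, zero_smul]
  rw [stepA, stepB, stepC, stepE, stepF, stepG]
/-- **Proposition.** Let `Φ ⊆ ℕⁿ` be finite and downward closed, `𝔫` the ideal generated by
the `(x-1_n)^λ`, `λ ∉ Φ`, and `S ⊆ ℝ_{≥0}ⁿ` bounded. Then the map `V_S → R/𝔫` is not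
surjective iff `rank A_{S,𝔫} < #Φ`; and if `#(S∩ℕⁿ) = #Φ`, these are also equivalent to the
existence of a nonzero real polynomial supported on `Φ` vanishing on `S∩ℕⁿ`. -/
theorem not_surjective_iff_rank_lt {n : ℕ} (Φ : Finset (Fin n → ℕ))
    (hdc : ∀ l ∈ Φ, ∀ l' : Fin n → ℕ, (∀ i, l' i ≤ l i) → l' ∈ Φ)
    (S : Set (Fin n → ℝ)) (hS : S ⊆ nonnegOrthant n) (hbdd : Bornology.IsBounded S) :
    ((¬ Function.Surjective fun f : VS S =>
        Ideal.Quotient.mk (idealN Φ) (f : Laurent n)) ↔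
      colRank (binomMat Φ S) < Φ.card) ∧
    (Nat.card {u : Fin n → ℕ // castN u ∈ S} = Φ.card →
      ((¬ Function.Surjective fun f : VS S =>
          Ideal.Quotient.mk (idealN Φ) (f : Laurent n)) ↔
        ∃ f : MvPolynomial (Fin n) ℝ,
          f ∈ Submodule.span ℝ
            ((fun l : Fin n → ℕ =>
              MvPolynomial.monomial (Finsupp.equivFunOnFinite.symm l) (1 : ℝ)) '' ↑Φ) ∧
          f ≠ 0 ∧
          ∀ u : Fin n → ℕ, castN u ∈ S →
            MvPolynomial.eval (fun k => (u k : ℝ)) f = 0)) := by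
  constructor
  · exact part1_iff Φ hdc S hS
  · intro hcard
    exact (part1_iff Φ hdc S hS).trans (part2_iff Φ hdc S hbdd hcard)

end OkSesh
end
end
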